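/- Eigenvalue exclusion for the double ansatz space: let P(λ) be a regular n×n matrix polynomial of degree k ≥ 2 and let ℒ(λ) ∈ 𝔻𝕄(P) = 𝕄₁(P) ∩ 𝕄₂(P) with ansatz vector v ∈ ℝ^k. If ℒ(λ) is a strong linearization of P(λ), then no root of the scalar polynomial Φ_k(λ)^T v coincides with a (finite) eigenvalue of P(λ), i.e., for every α ∈ ℂ with det P(α) = 0 one has Φ_k(α)^T v ≠ 0; moreover, if ∞ is an eigenvalue of P(λ) (det (rev_k P)(0) = 0), then the first component v₁ of v (the component multiplying φ_{k−1}) is nonzero. -/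

import Mathlib

open Polynomial Matrix

noncomputable section

/-- `Φ_k(λ) ⊗ I_n` as a `kn × n` polynomial matrix: its `i`-th block row (0-based)
is `φ_{k-1-i}(λ) I_n`. -/
def PhiMat (n k : ℕ) (φ : ℕ → Polynomial ℝ) :
    Matrix (Fin k × Fin n) (Fin n) (Polynomial ℝ) :=
  Matrix.of fun p s => if p.2 = s then φ (k - 1 - p.1.val) else 0

/-- The matrix polynomial `P(λ) = Σ_{i=0}^k P_i φ_i(λ)`. -/
def matP (n k : ℕ) (φ : ℕ → Polynomial ℝ) (Pm : ℕ → Matrix (Fin n) (Fin n) ℝ) :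
    Matrix (Fin n) (Fin n) (Polynomial ℝ) :=
  Matrix.of fun r s => ∑ i ∈ Finset.range (k + 1), C (Pm i r s) * φ i

/-- `v ⊗ Q` as a `kn × n` polynomial matrix. -/
def vKron (n k : ℕ) (v : Fin k → ℝ) (Q : Matrix (Fin n) (Fin n) (Polynomial ℝ)) :
    Matrix (Fin k × Fin n) (Fin n) (Polynomial ℝ) :=
  Matrix.of fun p s => C (v p.1) * Q p.2 s

/-- `v^T ⊗ Q` as an `n × kn` polynomial matrix. -/
def vKronRow (n k : ℕ) (v : Fin k → ℝ) (Q : Matrix (Fin n) (Fin n) (Polynomial ℝ)) :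
    Matrix (Fin n) (Fin k × Fin n) (Polynomial ℝ) :=
  Matrix.of fun s q => C (v q.1) * Q s q.2

/-- A matrix pencil: a matrix polynomial each of whose entries has degree at most `1`. -/
def IsPencil {m m' : Type*} (L : Matrix m m' (Polynomial ℝ)) : Prop :=
  ∀ p q, (L p q).degree ≤ 1

/-- `ℒ(λ) ∈ 𝕄₁(P)` with ansatz vector `v`, i.e. `ℒ(λ)(Φ_k(λ) ⊗ I_n) = v ⊗ P(λ)`. -/
def Ansatz1 (n k : ℕ) (φ : ℕ → Polynomial ℝ) (Pm : ℕ → Matrix (Fin n) (Fin n) ℝ)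
    (L : Matrix (Fin k × Fin n) (Fin k × Fin n) (Polynomial ℝ)) (v : Fin k → ℝ) : Prop :=
  L * PhiMat n k φ = vKron n k v (matP n k φ Pm)

/-- `ℒ(λ) ∈ 𝕄₂(P)` with ansatz vector `w`, i.e. `(Φ_k(λ)^T ⊗ I_n) ℒ(λ) = w^T ⊗ P(λ)`. -/
def Ansatz2 (n k : ℕ) (φ : ℕ → Polynomial ℝ) (Pm : ℕ → Matrix (Fin n) (Fin n) ℝ)
    (L : Matrix (Fin k × Fin n) (Fin k × Fin n) (Polynomial ℝ)) (w : Fin k → ℝ) : Prop :=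
  (PhiMat n k φ)ᵀ * L = vKronRow n k w (matP n k φ Pm)

/-- The anchor pencil `F_Φ^P(λ) = [m_Φ^P(λ); M_Φ(λ)]`. -/
def FPhi (n k : ℕ) (a b c : ℕ → ℝ) (Pm : ℕ → Matrix (Fin n) (Fin n) ℝ) :
    Matrix (Fin k × Fin n) (Fin k × Fin n) (Polynomial ℝ) :=
  Matrix.of fun p q =>
    if p.1.val = 0 then
      -- the block row m_Φ^P(λ)
      if q.1.val = 0 then
        C ((a (k - 1))⁻¹) * (X - C (b (k - 1))) * C (Pm k p.2 q.2) + C (Pm (k - 1) p.2 q.2)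
      else if q.1.val = 1 then
        C (Pm (k - 2) p.2 q.2) - C (c (k - 1) / a (k - 1)) * C (Pm k p.2 q.2)
      else
        C (Pm (k - 1 - q.1.val) p.2 q.2)
    else
      -- the block rows M_Φ(λ) = M_Φ^⋆(λ) ⊗ I_n
      (if q.1.val + 1 = p.1.val then -C (a (k - 1 - p.1.val))
       else if q.1.val = p.1.val then X - C (b (k - 1 - p.1.val))
       else if q.1.val = p.1.val + 1 then -C (c (k - 1 - p.1.val))
       else 0) * (if p.2 = q.2 then 1 else 0)

/-- The `kn × kn` real matrix `[v ⊗ I_n, B]`: first `n` columns form `v ⊗ I_n`,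
the remaining `(k-1)n` columns form `B`. -/
def extCols (n k : ℕ) (v : Fin k → ℝ)
    (B : Matrix (Fin k × Fin n) (Fin (k - 1) × Fin n) ℝ) :
    Matrix (Fin k × Fin n) (Fin k × Fin n) ℝ :=
  Matrix.of fun p q =>
    if h : q.1.val = 0 then (if p.2 = q.2 then v p.1 else 0)
    else B p (⟨q.1.val - 1, by have := q.1.isLt; omega⟩, q.2)

/-- The `kn × kn` real matrix `[w^T ⊗ I_n; B]`: first `n` rows form `w^T ⊗ I_n`,
the remaining `(k-1)n` rows form `B`. -/
def extRows (n k : ℕ) (w : Fin k → ℝ)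
    (B : Matrix (Fin (k - 1) × Fin n) (Fin k × Fin n) ℝ) :
    Matrix (Fin k × Fin n) (Fin k × Fin n) ℝ :=
  Matrix.of fun p q =>
    if h : p.1.val = 0 then (if p.2 = q.2 then w q.1 else 0)
    else B (⟨p.1.val - 1, by have := p.1.isLt; omega⟩, p.2) q

/-- A real matrix viewed as a constant matrix polynomial. -/
def liftC {m m' : Type*} (A : Matrix m m' ℝ) : Matrix m m' (Polynomial ℝ) :=
  A.map C

/-- Block transpose of a matrix consisting of `n × n` blocks: block `(i,j)` of `A^𝓑`
is block `(j,i)` of `A`. -/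
def blockTr {n k1 k2 : ℕ} {R : Type*} (A : Matrix (Fin k1 × Fin n) (Fin k2 × Fin n) R) :
    Matrix (Fin k2 × Fin n) (Fin k1 × Fin n) R :=
  Matrix.of fun p q => A (q.1, p.2) (p.1, q.2)

/-- `rev_d Q(λ) = λ^d Q(1/λ)`, entrywise reversal of a matrix polynomial of degree at most `d`. -/
def revMat {m m' : Type*} (d : ℕ) (L : Matrix m m' (Polynomial ℝ)) :
    Matrix m m' (Polynomial ℝ) :=
  Matrix.of fun p q => (L p q).reflect d

/-- Evaluation of a real matrix polynomial at a complex number. -/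
def evalC {m m' : Type*} (α : ℂ) (L : Matrix m m' (Polynomial ℝ)) : Matrix m m' ℂ :=
  Matrix.of fun p q => aeval α (L p q)

/-- A matrix polynomial viewed as a matrix over the field `ℝ(λ)` of rational functions. -/
def liftRat {m m' : Type*} (L : Matrix m m' (Polynomial ℝ)) : Matrix m m' (RatFunc ℝ) :=
  L.map (algebraMap (Polynomial ℝ) (RatFunc ℝ))

/-- `v ⊗ I_n` as a `kn × n` complex matrix. -/
def vKronC (n k : ℕ) (v : Fin k → ℝ) : Matrix (Fin k × Fin n) (Fin n) ℂ :=
  Matrix.of fun p s => if p.2 = s then (v p.1 : ℂ) else 0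

/-- `v ⊗ I_n` as a `kn × n` matrix over `ℝ(λ)`. -/
def vKronRat (n k : ℕ) (v : Fin k → ℝ) : Matrix (Fin k × Fin n) (Fin n) (RatFunc ℝ) :=
  Matrix.of fun p s => if p.2 = s then RatFunc.C (v p.1) else 0

/-- The pencil `Xm λ + Ym` as a matrix polynomial. -/
def pencilPoly {m : Type*} (Xm Ym : Matrix m m ℝ) : Matrix m m (Polynomial ℝ) :=
  Matrix.of fun p q => C (Xm p q) * X + C (Ym p q)

/-- `diag(P(λ), I_{(k-1)n})` as a `kn × kn` matrix polynomial. -/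
def diagPI (n k : ℕ) (Pp : Matrix (Fin n) (Fin n) (Polynomial ℝ)) :
    Matrix (Fin k × Fin n) (Fin k × Fin n) (Polynomial ℝ) :=
  Matrix.of fun p q =>
    if p.1.val = 0 ∧ q.1.val = 0 then Pp p.2 q.2 else if p = q then 1 else 0

/-- `ℒ(λ)` is a linearization of `P(λ)`: there are `U(λ), V(λ)` with nonzero real constant
determinants such that `U(λ)ℒ(λ)V(λ) = diag(P(λ), I_{(k-1)n})`. -/
def IsLinearization (n k : ℕ)
    (L : Matrix (Fin k × Fin n) (Fin k × Fin n) (Polynomial ℝ))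
    (Pp : Matrix (Fin n) (Fin n) (Polynomial ℝ)) : Prop :=
  ∃ U V : Matrix (Fin k × Fin n) (Fin k × Fin n) (Polynomial ℝ),
    (∃ cu : ℝ, cu ≠ 0 ∧ U.det = C cu) ∧ (∃ cv : ℝ, cv ≠ 0 ∧ V.det = C cv) ∧
    U * L * V = diagPI n k Pp

/-- `ℒ(λ)` is a strong linearization of `P(λ)` (of degree `k`): it is a linearization and
`rev₁ ℒ(λ)` is a linearization of `rev_k P(λ)`. -/
def IsStrongLin (n k : ℕ)
    (L : Matrix (Fin k × Fin n) (Fin k × Fin n) (Polynomial ℝ))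
    (Pp : Matrix (Fin n) (Fin n) (Polynomial ℝ)) : Prop :=
  IsLinearization n k L Pp ∧ IsLinearization n k (revMat 1 L) (revMat k Pp)


/-!
Write `S = v ⊗ Iₙ` and `T = Φ ⊗ Iₙ`, so that the ansatz equations read `L T = S P`,
`Tᵀ L = P Sᵀ`, and `Sᵀ T = q Iₙ` with `q = Φᵀ v`. If `U L V = diag(P, I)` with `U, V`
unimodular, then `M = V diag(adj P, det P · I) U` satisfies `M L = L M = det P · I`, hence
`M S = T adj P` and `Sᵀ M = adj P Tᵀ`. At an eigenvalue `α`, let `(X - α)^e` be the largest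
power dividing `adj P`; then `(X - α)^(e+1)` divides `det P`. Dividing by `(X - α)^e` and
evaluating at `α` turns `M` into `A = V(α) diag(B, 0) U(α)` with `B ≠ 0`, and the identities
into `A S = T B` and `Sᵀ A = B Tᵀ`. Since `T(α)` is injective and `rank A ≤ rank B`, the ranges
of `A` and `T B` coincide, so `q(α) = 0` would force `Sᵀ A = 0`, hence `B Tᵀ = 0` and `B = 0`.

For the eigenvalue at infinity, run the same argument at `α = 0` for `rev₁ L`, which lies in the
ansatz spaces of `rev_k P` with `Φ` replaced by `rev_{k-1} Φ`. Since `deg φⱼ = j`, the value of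
`rev_{k-1} q` at `0` is `v₁` times the leading coefficient of `φ_{k-1}`.
-/

section CornerDiag

variable {R S : Type*} [CommRing R] [CommRing S] {m n : Type*} [Fintype n] [DecidableEq m]

/-- When `Eᵀ * E = 1`, this is `diag(A, a • 1)` in a basis whose first vectors are the columns
of `E`. -/
def cornerDiag (E : Matrix m n R) (A : Matrix n n R) (a : R) : Matrix m m R :=
  E * A * Eᵀ + a • (1 - E * Eᵀ)

variable {E : Matrix m n R}

theorem cornerDiag_mul_cornerDiag [Fintype m] [DecidableEq n] (hE : Eᵀ * E = 1)
    (A B : Matrix n n R) (a b : R) :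
    cornerDiag E A a * cornerDiag E B b = cornerDiag E (A * B) (a * b) := by
  have hEE : ∀ X : Matrix n m R, Eᵀ * (E * X) = X := fun X => by
    rw [← Matrix.mul_assoc, hE, Matrix.one_mul]
  simp only [cornerDiag, Matrix.add_mul, Matrix.mul_add, Matrix.sub_mul, Matrix.mul_sub,
    Matrix.smul_mul, Matrix.mul_smul, Matrix.mul_assoc, hEE, Matrix.one_mul, Matrix.mul_one,
    smul_sub, sub_self]
  module

theorem cornerDiag_smul_one [DecidableEq n] (a : R) : cornerDiag E (a • 1) a = a • 1 := by
  simp only [cornerDiag, Matrix.mul_smul, Matrix.smul_mul, Matrix.mul_one, smul_sub]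
  abel

theorem cornerDiag_smul (c : R) (A : Matrix n n R) (a : R) :
    cornerDiag E (c • A) (c * a) = c • cornerDiag E A a := by
  simp only [cornerDiag, Matrix.mul_smul, Matrix.smul_mul, smul_add, smul_smul]

theorem cornerDiag_zero (A : Matrix n n R) : cornerDiag E A 0 = E * A * Eᵀ := by
  simp [cornerDiag]

theorem map_cornerDiag (f : R →+* S) (A : Matrix n n R) (a : R) :
    (cornerDiag E A a).map f = cornerDiag (E.map f) (A.map f) (f a) := by
  rw [cornerDiag, cornerDiag, Matrix.map_add _ (map_add f), Matrix.map_smul' _ _ _ (map_mul f),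
    Matrix.map_sub _ (map_sub f), Matrix.map_one _ (map_zero f) (map_one f), Matrix.map_mul,
    Matrix.map_mul, Matrix.map_mul, transpose_map]

end CornerDiag

theorem Matrix.mul_right_cancel_of_det_ne_zero {R : Type*} [CommRing R] [IsDomain R]
    {m n : Type*} [Fintype n] [DecidableEq n] {P : Matrix n n R} (hP : P.det ≠ 0)
    {A B : Matrix m n R} (h : A * P = B * P) : A = B := by
  have h' := congrArg (· * P.adjugate) h
  simp only [Matrix.mul_assoc, mul_adjugate, Matrix.mul_smul, Matrix.mul_one] at h'
  ext i j
  exact mul_left_cancel₀ hP (congrFun (congrFun h' i) j)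

theorem Matrix.mul_left_cancel_of_det_ne_zero {R : Type*} [CommRing R] [IsDomain R]
    {m n : Type*} [Fintype n] [DecidableEq n] {P : Matrix n n R} (hP : P.det ≠ 0)
    {A B : Matrix n m R} (h : P * A = P * B) : A = B := by
  have h' := congrArg (P.adjugate * ·) h
  simp only [← Matrix.mul_assoc, adjugate_mul, Matrix.smul_mul, Matrix.one_mul] at h'
  ext i j
  exact mul_left_cancel₀ hP (congrFun (congrFun h' i) j)

theorem Matrix.mul_eq_smul_one_of_equiv {R : Type*} [CommRing R] {m : Type*} [Fintype m]
    [DecidableEq m] {L U V D W : Matrix m m R} {d : R} (hU : IsUnit U.det) (hV : IsUnit V.det)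
    (hUV : U * L * V = D) (hWD : W * D = d • 1) (hDW : D * W = d • 1) :
    V * W * U * L = d • 1 ∧ L * (V * W * U) = d • 1 := by
  have hL : L = U⁻¹ * D * V⁻¹ := by
    rw [← hUV, Matrix.mul_assoc, Matrix.mul_assoc, mul_nonsing_inv _ hV, Matrix.mul_one,
      ← Matrix.mul_assoc, nonsing_inv_mul _ hU, Matrix.one_mul]
  constructor
  · rw [hL, show V * W * U * (U⁻¹ * D * V⁻¹) = V * (W * (U * U⁻¹) * D) * V⁻¹ by
      simp only [Matrix.mul_assoc], mul_nonsing_inv _ hU, Matrix.mul_one, hWD, Matrix.mul_smul,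
      Matrix.mul_one, Matrix.smul_mul, mul_nonsing_inv _ hV]
  · rw [hL, show U⁻¹ * D * V⁻¹ * (V * W * U) = U⁻¹ * (D * (V⁻¹ * V) * W) * U by
      simp only [Matrix.mul_assoc], nonsing_inv_mul _ hV, Matrix.mul_one, hDW, Matrix.mul_smul,
      Matrix.mul_one, Matrix.smul_mul, nonsing_inv_mul _ hU]

theorem Matrix.equiv_adjugate_intertwines {R : Type*} [CommRing R] [IsDomain R] {m n : Type*}
    [Fintype m] [Fintype n] [DecidableEq m] [DecidableEq n] {P : Matrix n n R} (hP : P.det ≠ 0)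
    {L U V : Matrix m m R} (hU : IsUnit U.det) (hV : IsUnit V.det) {E : Matrix m n R}
    (hE : Eᵀ * E = 1) (hUV : U * L * V = cornerDiag E P 1) {S T : Matrix m n R}
    (h1 : L * T = S * P) (h2 : Tᵀ * L = P * Sᵀ) :
    V * cornerDiag E P.adjugate P.det * U * S = T * P.adjugate ∧
      Sᵀ * (V * cornerDiag E P.adjugate P.det * U) = P.adjugate * Tᵀ := by
  obtain ⟨hML, hLM⟩ := mul_eq_smul_one_of_equiv hU hV hUV
    (by rw [cornerDiag_mul_cornerDiag hE, adjugate_mul, mul_one, cornerDiag_smul_one])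
    (by rw [cornerDiag_mul_cornerDiag hE, mul_adjugate, one_mul, cornerDiag_smul_one])
  constructor
  · refine mul_right_cancel_of_det_ne_zero hP ?_
    rw [Matrix.mul_assoc _ S, ← h1, ← Matrix.mul_assoc, hML, Matrix.mul_assoc T, adjugate_mul,
      Matrix.smul_mul, Matrix.one_mul, Matrix.mul_smul, Matrix.mul_one]
  · refine mul_left_cancel_of_det_ne_zero hP ?_
    rw [← Matrix.mul_assoc, ← h2, Matrix.mul_assoc, hLM, ← Matrix.mul_assoc P, mul_adjugate,
      Matrix.smul_mul, Matrix.one_mul, Matrix.mul_smul, Matrix.mul_one]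

theorem Matrix.exists_eq_X_sub_C_pow_smul {R : Type*} [CommRing R] [IsDomain R] {m n : Type*}
    {N : Matrix m n R[X]} (hN : N ≠ 0) (α : R) :
    ∃ (e : ℕ) (N' : Matrix m n R[X]), N = (X - C α) ^ e • N' ∧ N'.map (eval α) ≠ 0 := by
  obtain ⟨i, j, hij⟩ : ∃ i j, N i j ≠ 0 := by
    by_contra! h
    exact hN (Matrix.ext h)
  induction hd : (N i j).natDegree using Nat.strong_induction_on generalizing N with
  | _ d ih =>
    by_cases hα : N.map (eval α) = 0
    · have hdvd : ∀ i j, X - C α ∣ N i j := fun i j =>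
        dvd_iff_isRoot.mpr (congrFun (congrFun hα i) j)
      choose N₁ hN₁ using hdvd
      have hNN₁ : N = (X - C α) • Matrix.of N₁ := Matrix.ext fun i j => hN₁ i j
      have hN₁ij : N₁ i j ≠ 0 := fun h => hij (by rw [hN₁, h, mul_zero])
      have hdeg : (N₁ i j).natDegree < d := by
        rw [← hd, hN₁, natDegree_mul (X_sub_C_ne_zero α) hN₁ij, natDegree_X_sub_C]
        omega
      obtain ⟨e, N', hN', hN'α⟩ := ih _ hdeg (N := Matrix.of N₁)
        (fun h => hN₁ij (congrFun (congrFun h i) j)) hN₁ij rfl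
      exact ⟨e + 1, N', by rw [hNN₁, hN', smul_smul, pow_succ'], hN'α⟩
    · exact ⟨0, N, by rw [pow_zero, one_smul], hα⟩

theorem Matrix.adjugate_eq_X_sub_C_pow_smul {K : Type*} [Field K] {n : Type*} [Fintype n]
    [DecidableEq n] {P : Matrix n n K[X]} (hP : P.det ≠ 0) {α : K}
    (hα : (P.map (evalRingHom α)).det = 0) :
    ∃ (e : ℕ) (N : Matrix n n K[X]) (d : K[X]), P.adjugate = (X - C α) ^ e • N ∧
      P.det = (X - C α) ^ e * d ∧ N.map (evalRingHom α) ≠ 0 ∧ d.eval α = 0 := by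
  have : Nonempty n := by
    by_contra h
    rw [not_nonempty_iff] at h
    simp [det_isEmpty] at hα
  have hN : P.adjugate ≠ 0 := fun h => hP <| eq_zero_of_pow_eq_zero <| by
    rw [← det_adjugate, h, det_zero]
  obtain ⟨e, N, hPN, hN⟩ := exists_eq_X_sub_C_pow_smul hN α
  have hπe : (X - C α) ^ e ≠ 0 := pow_ne_zero e (X_sub_C_ne_zero α)
  have hNP : (X - C α) ^ e • (N * P) = P.det • 1 := by
    rw [← Matrix.smul_mul, ← hPN, adjugate_mul]
  let i : n := Classical.arbitrary n
  have hd : P.det = (X - C α) ^ e * (N * P) i i := by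
    simpa using (congrFun (congrFun hNP i) i).symm
  refine ⟨e, N, (N * P) i i, hPN, hd, hN, ?_⟩
  have hNP' : N * P = (N * P) i i • 1 := by
    refine smul_right_injective _ hπe ?_
    dsimp only
    rw [hNP, hd, smul_smul]
  have := congrArg (fun M => (M.map (evalRingHom α)).det) hNP'
  simp only [Matrix.map_mul, det_mul, hα, mul_zero, Matrix.map_smul' _ _ _ (map_mul _),
    Matrix.map_one _ (map_zero _) (map_one _), det_smul, det_one, mul_one] at this
  exact eq_zero_of_pow_eq_zero this.symm

theorem Matrix.eq_zero_of_rank_le_of_intertwines {K m n : Type*} [Field K] [Fintype m]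
    [Fintype n] [DecidableEq n] {A : Matrix m m K} {S T : Matrix m n K} {B : Matrix n n K}
    {G : Matrix n m K} (hG : G * T = 1) (hST : Sᵀ * T = 0) (hrank : A.rank ≤ B.rank)
    (h1 : A * S = T * B) (h2 : Sᵀ * A = B * Tᵀ) : B = 0 := by
  have hrange : LinearMap.range (T * B).mulVecLin = LinearMap.range A.mulVecLin := by
    refine Submodule.eq_of_le_of_finrank_le ?_ ?_
    · rw [← h1, mulVecLin_mul]
      exact LinearMap.range_comp_le_range _ _
    · calc A.rank ≤ B.rank := hrank
        _ = (G * (T * B)).rank := by rw [← Matrix.mul_assoc, hG, Matrix.one_mul]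
        _ ≤ (T * B).rank := rank_mul_le_right _ _
  have hTGA : T * (G * A) = A := by
    refine ext_iff_mulVec.mpr fun x => ?_
    obtain ⟨y, hy⟩ : A *ᵥ x ∈ LinearMap.range (T * B).mulVecLin := hrange ▸ ⟨x, rfl⟩
    rw [← mulVec_mulVec, ← mulVec_mulVec, ← hy, mulVecLin_apply, mulVec_mulVec (M := G),
      ← Matrix.mul_assoc G, hG, Matrix.one_mul, mulVec_mulVec]
  have hTBt : T * Bᵀ = 0 := by
    rw [← transpose_transpose T, ← transpose_mul, ← h2, ← hTGA, ← Matrix.mul_assoc, hST,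
      Matrix.zero_mul, transpose_zero]
  rw [← transpose_transpose B, ← Matrix.one_mul Bᵀ, ← hG, Matrix.mul_assoc, hTBt,
    Matrix.mul_zero, transpose_zero]

theorem eigenvalue_exclusion {K : Type*} [Field K] {m n : Type*} [Fintype m] [Fintype n]
    [DecidableEq m] [DecidableEq n] {P : Matrix n n K[X]} (hP : P.det ≠ 0)
    {L U V : Matrix m m K[X]} (hU : IsUnit U.det) (hV : IsUnit V.det)
    {E : Matrix m n K[X]} (hE : Eᵀ * E = 1) (hUV : U * L * V = cornerDiag E P 1)
    {S T : Matrix m n K[X]} (h1 : L * T = S * P) (h2 : Tᵀ * L = P * Sᵀ)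
    {q : K[X]} (hq : Sᵀ * T = q • 1) {α : K} (hα : (P.map (evalRingHom α)).det = 0)
    {G : Matrix n m K} (hG : G * T.map (evalRingHom α) = 1) : q.eval α ≠ 0 := by
  intro hqα
  set ev := evalRingHom α
  obtain ⟨e, N, d, hPN, hPd, hN, hd⟩ := adjugate_eq_X_sub_C_pow_smul hP hα
  obtain ⟨hMS, hSM⟩ := equiv_adjugate_intertwines hP hU hV hE hUV h1 h2
  have hπe : (X - C α) ^ e ≠ 0 := pow_ne_zero e (X_sub_C_ne_zero α)
  set M := V * cornerDiag E N d * U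
  rw [hPN, hPd, cornerDiag_smul, Matrix.mul_smul, Matrix.smul_mul] at hMS hSM
  have hMS' : M * S = T * N :=
    smul_right_injective _ hπe (by simpa only [Matrix.smul_mul, Matrix.mul_smul] using hMS)
  have hSM' : Sᵀ * M = N * Tᵀ :=
    smul_right_injective _ hπe (by simpa only [Matrix.smul_mul, Matrix.mul_smul] using hSM)
  refine hN (eq_zero_of_rank_le_of_intertwines (A := M.map ev) (S := S.map ev) hG ?_ ?_ ?_ ?_)
  · rw [← transpose_map, ← Matrix.map_mul, hq, Matrix.map_smul' _ _ _ (map_mul ev)]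
    simp [ev, hqα]
  · calc (M.map ev).rank
        = (V.map ev * (E.map ev * N.map ev * (E.map ev)ᵀ) * U.map ev).rank := by
          rw [Matrix.map_mul, Matrix.map_mul, map_cornerDiag, coe_evalRingHom, hd,
            cornerDiag_zero]
      _ ≤ (E.map ev * N.map ev * (E.map ev)ᵀ).rank :=
          (rank_mul_le_left _ _).trans (rank_mul_le_right _ _)
      _ ≤ (N.map ev).rank := (rank_mul_le_left _ _).trans (rank_mul_le_right _ _)
  · rw [← Matrix.map_mul, hMS', Matrix.map_mul]
  · rw [← transpose_map, ← Matrix.map_mul, hSM', Matrix.map_mul, transpose_map]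

theorem eigenvalue_exclusion_aeval {K F : Type*} [Field K] [Field F] [Algebra K F]
    {m n : Type*} [Fintype m] [Fintype n] [DecidableEq m] [DecidableEq n]
    {P : Matrix n n K[X]} (hP : P.det ≠ 0)
    {L U V : Matrix m m K[X]} (hU : IsUnit U.det) (hV : IsUnit V.det)
    {E : Matrix m n K[X]} (hE : Eᵀ * E = 1) (hUV : U * L * V = cornerDiag E P 1)
    {S T : Matrix m n K[X]} (h1 : L * T = S * P) (h2 : Tᵀ * L = P * Sᵀ)
    {q : K[X]} (hq : Sᵀ * T = q • 1) {α : F} (hα : (P.map (aeval α)).det = 0)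
    {G : Matrix n m F} (hG : G * T.map (aeval α) = 1) : aeval α q ≠ 0 := by
  set ρ := mapRingHom (algebraMap K F)
  have hev : ⇑(evalRingHom α) ∘ ⇑ρ = ⇑(aeval α) := funext fun p => eval_map_algebraMap p α
  rw [← eval_map_algebraMap]
  refine eigenvalue_exclusion (P := P.map ρ) (L := L.map ρ) (U := U.map ρ) (V := V.map ρ)
    (E := E.map ρ) (S := S.map ρ) (T := T.map ρ) ?_ ?_ ?_ ?_ ?_ ?_ ?_ ?_
    (by rwa [Matrix.map_map, hev]) (by rwa [Matrix.map_map, hev])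
  · rw [← ρ.mapMatrix_apply, ← RingHom.map_det]
    exact (map_ne_zero_iff ρ (map_injective _ (algebraMap K F).injective)).mpr hP
  · rw [← ρ.mapMatrix_apply, ← RingHom.map_det]
    exact hU.map ρ
  · rw [← ρ.mapMatrix_apply, ← RingHom.map_det]
    exact hV.map ρ
  · rw [← transpose_map, ← Matrix.map_mul, hE, Matrix.map_one _ (map_zero ρ) (map_one ρ)]
  · rw [← Matrix.map_mul, ← Matrix.map_mul, hUV, map_cornerDiag, map_one]
  · rw [← Matrix.map_mul, ← Matrix.map_mul, h1]
  · rw [← transpose_map, ← transpose_map, ← Matrix.map_mul, ← Matrix.map_mul, h2]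
  · rw [← transpose_map, ← Matrix.map_mul, hq, Matrix.map_smul' _ _ _ (map_mul ρ),
      Matrix.map_one _ (map_zero ρ) (map_one ρ)]
    rfl

section KronOne

variable {R S : Type*} [CommRing R] [CommRing S] {ι : Type*} (n : Type*) [DecidableEq n]

/-- `w ⊗ Iₙ`. -/
def kronOne (w : ι → R) : Matrix (ι × n) n R :=
  of fun p s => if p.2 = s then w p.1 else 0

variable {n}

@[simp]
theorem kronOne_apply (w : ι → R) (i : ι) (r s : n) :
    kronOne n w (i, r) s = if r = s then w i else 0 :=
  rfl

theorem kronOne_transpose_mul [Fintype ι] [Fintype n] (w w' : ι → R) :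
    (kronOne n w)ᵀ * kronOne n w' = (∑ i, w i * w' i) • 1 := by
  ext s t
  by_cases h : s = t <;>
    simp [kronOne, mul_apply, Fintype.sum_prod_type, one_apply, h, eq_comm]

theorem kronOne_mul_apply [Fintype n] (w : ι → R) (Q : Matrix n n R) (i : ι) (r s : n) :
    (kronOne n w * Q) (i, r) s = w i * Q r s := by
  simp [kronOne, mul_apply]

theorem mul_transpose_kronOne_apply {m : Type*} [Fintype n] (A : Matrix m n R) (w : ι → R)
    (p : m) (j : ι) (s : n) : (A * (kronOne n w)ᵀ) p (j, s) = A p s * w j := by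
  simp [kronOne, mul_apply]

theorem map_kronOne (f : R → S) (hf : f 0 = 0) (w : ι → R) :
    (kronOne n w).map f = kronOne n (fun i => f (w i)) := by
  ext p s
  simp [kronOne, apply_ite f, hf]

theorem transpose_kronOne_single_one_mul [Fintype ι] [DecidableEq ι] [Fintype n] (i : ι) :
    (kronOne n (Pi.single i (1 : R)))ᵀ * kronOne n (Pi.single i (1 : R)) = 1 := by
  rw [kronOne_transpose_mul, Fintype.sum_eq_single i fun j hj => by simp [hj],
    Pi.single_eq_same, one_mul, one_smul]

theorem transpose_kronOne_single_mul [Fintype ι] [DecidableEq ι] [Fintype n] {K : Type*} [Field K]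
    {w : ι → K} {i : ι} (hi : w i ≠ 0) :
    (kronOne n (Pi.single i (w i)⁻¹))ᵀ * kronOne n w = 1 := by
  rw [kronOne_transpose_mul, Fintype.sum_eq_single i fun j hj => by simp [hj],
    Pi.single_eq_same, inv_mul_cancel₀ hi, one_smul]

end KronOne

theorem PhiMat_eq (n k : ℕ) (φ : ℕ → ℝ[X]) :
    PhiMat n k φ = kronOne (Fin n) (fun i : Fin k => φ (k - 1 - i)) :=
  rfl

theorem vKron_eq {n k : ℕ} (v : Fin k → ℝ) (Q : Matrix (Fin n) (Fin n) ℝ[X]) :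
    vKron n k v Q = kronOne (Fin n) (fun i => C (v i)) * Q := by
  refine Matrix.ext fun ⟨i, r⟩ s => ?_
  rw [kronOne_mul_apply]
  rfl

theorem vKronRow_eq {n k : ℕ} (v : Fin k → ℝ) (Q : Matrix (Fin n) (Fin n) ℝ[X]) :
    vKronRow n k v Q = Q * (kronOne (Fin n) (fun i => C (v i)))ᵀ := by
  refine Matrix.ext fun s ⟨i, r⟩ => ?_
  rw [mul_transpose_kronOne_apply]
  exact mul_comm _ _

theorem diagPI_eq {n k : ℕ} (hk : 0 < k) (Q : Matrix (Fin n) (Fin n) ℝ[X]) :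
    diagPI n k Q = cornerDiag (kronOne (Fin n) (Pi.single ⟨0, hk⟩ 1)) Q 1 := by
  refine Matrix.ext fun ⟨i, r⟩ ⟨j, s⟩ => ?_
  simp only [diagPI, cornerDiag, of_apply, one_smul, Matrix.add_apply, Matrix.sub_apply,
    mul_transpose_kronOne_apply, kronOne_mul_apply, kronOne_apply, one_apply, Pi.single_apply,
    Prod.ext_iff, Fin.ext_iff]
  by_cases hi : i.val = 0 <;> by_cases hj : j.val = 0 <;> simp [hi, hj]

theorem aeval_ne_zero_of_isLinearization {n k : ℕ} (hk : 0 < k)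
    {Q : Matrix (Fin n) (Fin n) ℝ[X]} (hQ : Q.det ≠ 0)
    {L : Matrix (Fin k × Fin n) (Fin k × Fin n) ℝ[X]} (hlin : IsLinearization n k L Q)
    {θ : Fin k → ℝ[X]} {v : Fin k → ℝ} (h1 : L * kronOne (Fin n) θ = vKron n k v Q)
    (h2 : (kronOne (Fin n) θ)ᵀ * L = vKronRow n k v Q) {α : ℂ} (hα : (evalC α Q).det = 0)
    {i : Fin k} (hθ : aeval α (θ i) ≠ 0) : aeval α (∑ j, C (v j) * θ j) ≠ 0 := by
  obtain ⟨U, V, ⟨cu, hcu, hU⟩, ⟨cv, hcv, hV⟩, hUV⟩ := hlin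
  rw [diagPI_eq hk] at hUV
  rw [vKron_eq] at h1
  rw [vKronRow_eq] at h2
  have hG : (kronOne (Fin n) (Pi.single i (aeval α (θ i))⁻¹))ᵀ *
      (kronOne (Fin n) θ).map (aeval α) = 1 := by
    rw [map_kronOne _ (map_zero (aeval α))]
    exact transpose_kronOne_single_mul (w := fun j => aeval α (θ j)) hθ
  exact eigenvalue_exclusion_aeval hQ (hU ▸ isUnit_C.mpr hcu.isUnit)
    (hV ▸ isUnit_C.mpr hcv.isUnit) (transpose_kronOne_single_one_mul _) hUV h1 h2
    (kronOne_transpose_mul _ _) hα hG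

theorem degree_eq_of_threeTermRecurrence {K : Type*} [Field K] {a b c : ℕ → K}
    (ha : ∀ j, a j ≠ 0) {φ : ℕ → K[X]} (hφ0 : φ 0 = 1) (hφ1 : C (a 0) * φ 1 = (X - C (b 0)) * φ 0)
    (hφrec : ∀ j, C (a (j + 1)) * φ (j + 2) =
      (X - C (b (j + 1))) * φ (j + 1) - C (c (j + 1)) * φ j) (j : ℕ) :
    (φ j).degree = j := by
  induction j using Nat.twoStepInduction with
  | zero => simp [hφ0]
  | one => rw [← degree_C_mul (ha 0), hφ1, hφ0, mul_one, degree_X_sub_C, Nat.cast_one]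
  | more j ih₀ ih₁ =>
    have hlead : ((X - C (b (j + 1))) * φ (j + 1)).degree = ↑(j + 2) := by
      rw [degree_mul, degree_X_sub_C, ih₁]
      norm_cast
      omega
    rw [← degree_C_mul (ha (j + 1)), hφrec, degree_sub_eq_left_of_degree_lt, hlead]
    calc (C (c (j + 1)) * φ j).degree ≤ (φ j).degree := by
          rw [← smul_eq_C_mul]
          exact degree_smul_le _ _
      _ < _ := by rw [ih₀, hlead]; exact_mod_cast (by omega)

theorem natDegree_matP_le {n k : ℕ} {φ : ℕ → ℝ[X]} (hφ : ∀ j, (φ j).natDegree ≤ j)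
    (Pm : ℕ → Matrix (Fin n) (Fin n) ℝ) (r s : Fin n) : (matP n k φ Pm r s).natDegree ≤ k :=
  natDegree_sum_le_of_forall_le _ _ fun j hj =>
    (natDegree_C_mul_le _ _).trans ((hφ j).trans (Nat.lt_succ_iff.mp (Finset.mem_range.mp hj)))

theorem revMat_mul {l m o : Type*} [Fintype m] {A : Matrix l m ℝ[X]} {B : Matrix m o ℝ[X]}
    {a b : ℕ} (hA : ∀ i j, (A i j).natDegree ≤ a) (hB : ∀ i j, (B i j).natDegree ≤ b) :
    revMat (a + b) (A * B) = revMat a A * revMat b B := by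
  refine Matrix.ext fun i j => Polynomial.ext fun d => ?_
  simp only [revMat, of_apply, mul_apply, coeff_reflect, finsetSum_coeff]
  exact Finset.sum_congr rfl fun x _ => by rw [← reflect_mul _ _ (hA i x) (hB x j), coeff_reflect]

theorem revMat_kronOne {n : Type*} [DecidableEq n] {ι : Type*} (d : ℕ) (w : ι → ℝ[X]) :
    revMat d (kronOne n w) = kronOne n (fun i => (w i).reflect d) := by
  refine Matrix.ext fun ⟨i, r⟩ s => ?_
  simp only [revMat, of_apply, kronOne_apply]
  split_ifs <;> simp

theorem natDegree_kronOne_le {n : Type*} [DecidableEq n] {ι : Type*} {w : ι → ℝ[X]} {d : ℕ}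
    (hw : ∀ i, (w i).natDegree ≤ d) (p : ι × n) (s : n) : (kronOne n w p s).natDegree ≤ d := by
  simp only [kronOne, of_apply]
  split_ifs <;> simp [hw]

theorem revMat_zero_kronOne_C {n : Type*} [DecidableEq n] {ι : Type*} (v : ι → ℝ) :
    revMat 0 (kronOne n (fun i => C (v i))) = kronOne n (fun i => C (v i)) := by
  simp [revMat_kronOne, reflect_C]

theorem IsPencil.natDegree_le {m m' : Type*} {L : Matrix m m' ℝ[X]} (hL : IsPencil L) (i : m)
    (j : m') : (L i j).natDegree ≤ 1 :=
  natDegree_le_iff_degree_le.mpr (hL i j)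

theorem revMat_mul_kronOne_eq_vKron {n k : ℕ} (hk : 0 < k)
    {L : Matrix (Fin k × Fin n) (Fin k × Fin n) ℝ[X]} (hL : IsPencil L) {θ : Fin k → ℝ[X]}
    (hθ : ∀ i, (θ i).natDegree ≤ k - 1) {v : Fin k → ℝ} {Q : Matrix (Fin n) (Fin n) ℝ[X]}
    (hQ : ∀ r s, (Q r s).natDegree ≤ k) (h : L * kronOne (Fin n) θ = vKron n k v Q) :
    revMat 1 L * kronOne (Fin n) (fun i => (θ i).reflect (k - 1)) = vKron n k v (revMat k Q) := by
  rw [vKron_eq] at h ⊢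
  calc revMat 1 L * kronOne (Fin n) (fun i => (θ i).reflect (k - 1))
      = revMat (1 + (k - 1)) (L * kronOne (Fin n) θ) := by
        rw [revMat_mul hL.natDegree_le (natDegree_kronOne_le hθ), revMat_kronOne]
    _ = revMat (0 + k) (kronOne (Fin n) (fun i => C (v i)) * Q) := by
        rw [h, Nat.add_sub_cancel' hk, zero_add]
    _ = _ := by
        rw [revMat_mul (natDegree_kronOne_le fun i => (natDegree_C (v i)).le) hQ,
          revMat_zero_kronOne_C]

theorem revMat_transpose_kronOne_mul_eq_vKronRow {n k : ℕ} (hk : 0 < k)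
    {L : Matrix (Fin k × Fin n) (Fin k × Fin n) ℝ[X]} (hL : IsPencil L) {θ : Fin k → ℝ[X]}
    (hθ : ∀ i, (θ i).natDegree ≤ k - 1) {v : Fin k → ℝ} {Q : Matrix (Fin n) (Fin n) ℝ[X]}
    (hQ : ∀ r s, (Q r s).natDegree ≤ k) (h : (kronOne (Fin n) θ)ᵀ * L = vKronRow n k v Q) :
    (kronOne (Fin n) (fun i => (θ i).reflect (k - 1)))ᵀ * revMat 1 L =
      vKronRow n k v (revMat k Q) := by
  rw [vKronRow_eq] at h ⊢
  calc (kronOne (Fin n) (fun i => (θ i).reflect (k - 1)))ᵀ * revMat 1 L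
      = revMat (k - 1 + 1) ((kronOne (Fin n) θ)ᵀ * L) := by
        rw [revMat_mul (A := (kronOne (Fin n) θ)ᵀ) (fun i j => natDegree_kronOne_le hθ j i)
          hL.natDegree_le, ← revMat_kronOne]
        rfl
    _ = revMat (k + 0) (Q * (kronOne (Fin n) (fun i => C (v i)))ᵀ) := by
        rw [h, Nat.sub_add_cancel hk, add_zero]
    _ = _ := by
        rw [revMat_mul (B := (kronOne (Fin n) (fun i => C (v i)))ᵀ) hQ
            fun i j => natDegree_kronOne_le (fun i => (natDegree_C (v i)).le) j i,
          show revMat 0 (kronOne (Fin n) (fun i => C (v i)))ᵀ = _ from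
            congrArg transpose (revMat_zero_kronOne_C v)]

theorem det_revMat_ne_zero {n : Type*} [Fintype n] [DecidableEq n] {Q : Matrix n n ℝ[X]} {d : ℕ}
    (hQ : ∀ r s, (Q r s).natDegree ≤ d) (hdet : Q.det ≠ 0) : (revMat d Q).det ≠ 0 := by
  obtain ⟨x, hx⟩ : ∃ x : ℝ, eval x (X * Q.det) ≠ 0 := by
    by_contra! h
    exact mul_ne_zero X_ne_zero hdet (Polynomial.funext fun x => by simpa using h x)
  rw [eval_mul, eval_X] at hx
  have : Invertible x := invertibleOfNonzero (left_ne_zero_of_mul hx)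
  have hmat : x ^ d • (revMat d Q).map (evalRingHom ⅟x) = Q.map (evalRingHom x) := by
    ext r s
    simp only [revMat, Matrix.smul_apply, map_apply, of_apply, coe_evalRingHom, smul_eq_mul]
    rw [mul_comm, ← eval₂_id, eval₂_reflect_mul_pow _ _ _ _ (hQ r s), eval₂_id]
  intro h
  have := congrArg det hmat
  rw [det_smul, ← RingHom.mapMatrix_apply, ← RingHom.mapMatrix_apply, ← RingHom.map_det,
    ← RingHom.map_det, h, map_zero, mul_zero, coe_evalRingHom] at this
  exact right_ne_zero_of_mul hx this.symm

theorem statement_19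
    (n k : ℕ) (hk : 2 ≤ k)
    (a b c : ℕ → ℝ) (ha : ∀ j, a j ≠ 0)
    (φ : ℕ → Polynomial ℝ) (hφ0 : φ 0 = 1)
    (hφ1 : C (a 0) * φ 1 = (X - C (b 0)) * φ 0)
    (hφrec : ∀ j, C (a (j + 1)) * φ (j + 2) =
      (X - C (b (j + 1))) * φ (j + 1) - C (c (j + 1)) * φ j)
    (Pm : ℕ → Matrix (Fin n) (Fin n) ℝ)
    (hreg : (matP n k φ Pm).det ≠ 0)
    (L : Matrix (Fin k × Fin n) (Fin k × Fin n) (Polynomial ℝ)) (hL : IsPencil L) (v : Fin k → ℝ)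
    (hv1 : Ansatz1 n k φ Pm L v) (hv2 : Ansatz2 n k φ Pm L v)
    (hstrong : IsStrongLin n k L (matP n k φ Pm)) :
    (∀ α : ℂ, (evalC α (matP n k φ Pm)).det = 0 →
        aeval α (∑ i : Fin k, C (v i) * φ (k - 1 - i.val)) ≠ 0) ∧
    ((evalC 0 (revMat k (matP n k φ Pm))).det = 0 → v ⟨0, by omega⟩ ≠ 0) := by
  have hk0 : 0 < k := by omega
  have hdeg := degree_eq_of_threeTermRecurrence ha hφ0 hφ1 hφrec
  have hP := natDegree_matP_le (k := k) (fun j => natDegree_le_of_degree_le (hdeg j).le) Pm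
  have hθ (i : Fin k) : (φ (k - 1 - i)).natDegree ≤ k - 1 :=
    (natDegree_le_of_degree_le (hdeg _).le).trans (Nat.sub_le _ _)
  rw [Ansatz1, PhiMat_eq] at hv1
  rw [Ansatz2, PhiMat_eq] at hv2
  refine ⟨fun α hα => ?_, fun hα hv0 => ?_⟩
  · refine aeval_ne_zero_of_isLinearization hk0 hreg hstrong.1 hv1 hv2 hα
      (i := ⟨k - 1, by omega⟩) ?_
    simp [hφ0]
  · refine aeval_ne_zero_of_isLinearization hk0 (det_revMat_ne_zero hP hreg) hstrong.2
      (revMat_mul_kronOne_eq_vKron hk0 hL hθ hP hv1)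
      (revMat_transpose_kronOne_mul_eq_vKronRow hk0 hL hθ hP hv2) hα (i := ⟨0, hk0⟩) ?_ ?_
    · rw [← coeff_zero_eq_aeval_zero', coeff_reflect, revAt_zero]
      exact (_root_.map_ne_zero _).mpr (coeff_ne_zero_of_eq_degree (hdeg _))
    · rw [← coeff_zero_eq_aeval_zero', finsetSum_coeff, Finset.sum_eq_zero, map_zero]
      intro j _
      rw [coeff_C_mul, coeff_reflect, revAt_zero]
      by_cases hj : j.val = 0
      · rw [show j = ⟨0, hk0⟩ from Fin.ext hj, hv0, zero_mul]
      · rw [coeff_eq_zero_of_degree_lt (by rw [hdeg]; exact_mod_cast (by omega)), mul_zero]
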